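/- arXiv:2505.10683 — 4 statements merged into one kernel-verified Lean document; each statement's English description precedes it below -/
import Mathlib

section
/- Let k₁ be a positive integer such that k₁ divides k₂² − k₂ + 1 for some integer k₂. Then k₁ ≢ 2 (mod 3). -/
lemma aux_prime_case (p : ℕ) (hp : p.Prime) (k : ℤ) (h : (p : ℤ) ∣ k ^ 2 - k + 1) :
    p % 3 ≠ 2 := by
  intro h2
  haveI : Fact p.Prime := ⟨hp⟩
  set x : ZMod p := (k : ZMod p) with hxdef
  have hx : x ^ 2 - x + 1 = 0 := by
    have := (ZMod.intCast_zmod_eq_zero_iff_dvd _ p).mpr h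
    push_cast at this
    linear_combination this
  have hx0 : x ≠ 0 := by
    intro h0
    rw [h0] at hx
    simp at hx
  have hcube : x ^ 3 = -1 := by linear_combination (x + 1) * hx
  have hfer : x ^ (p - 1) = 1 := ZMod.pow_card_sub_one_eq_one hx0
  have hp2 : 2 ≤ p := hp.two_le
  have hq : p - 1 = 3 * ((p - 1) / 3) + 1 := by omega
  set q := (p - 1) / 3 with hqdef
  have hx' : (-1 : ZMod p) ^ q * x = 1 := by
    calc (-1 : ZMod p) ^ q * x = (x ^ 3) ^ q * x ^ 1 := by rw [hcube, pow_one]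
    _ = x ^ (3 * q + 1) := by rw [← pow_mul, ← pow_add]
    _ = 1 := by rw [← hq, hfer]
  rcases Nat.even_or_odd q with he | ho
  · rw [he.neg_one_pow, one_mul] at hx'
    rw [hx'] at hx
    norm_num at hx
  · rw [ho.neg_one_pow, neg_one_mul, neg_eq_iff_eq_neg] at hx'
    rw [hx'] at hx
    have h3 : ((3 : ℕ) : ZMod p) = 0 := by push_cast; linear_combination hx
    have hpd : p ∣ 3 := (ZMod.natCast_eq_zero_iff 3 p).mp h3
    have hple : p ≤ 3 := Nat.le_of_dvd (by norm_num) hpd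
    interval_cases p <;> omega

lemma aux_exists_prime (n : ℕ) (h : n % 3 = 2) :
    ∃ p, p.Prime ∧ p ∣ n ∧ p % 3 = 2 := by
  induction n using Nat.strong_induction_on with
  | _ n ih =>
    have hn1 : n ≠ 1 := by omega
    have hn0 : n ≠ 0 := by omega
    have hpmin : n.minFac.Prime := Nat.minFac_prime hn1
    have hdvd : n.minFac ∣ n := Nat.minFac_dvd n
    set p := n.minFac with hpdef
    by_cases hc2 : p % 3 = 2
    · exact ⟨p, hpmin, hdvd, hc2⟩
    by_cases hc0 : p % 3 = 0
    · exfalso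
      have : (3 : ℕ) ∣ p := by omega
      have h3 : (3 : ℕ) ∣ n := this.trans hdvd
      omega
    have hc1 : p % 3 = 1 := by
      have := Nat.mod_lt p (show 0 < 3 by norm_num)
      omega
    obtain ⟨m, hm⟩ := hdvd
    have hmlt : m < n := by
      have hp2 : 2 ≤ p := hpmin.two_le
      have hm0 : m ≠ 0 := by rintro rfl; simp at hm; omega
      nlinarith [Nat.one_le_iff_ne_zero.mpr hm0]
    have hmmod : m % 3 = 2 := by
      have h1 : n % 3 = (p % 3) * (m % 3) % 3 := by rw [hm, Nat.mul_mod]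
      rw [hc1, one_mul] at h1
      omega
    obtain ⟨r, hr, hrd, hrm⟩ := ih m hmlt hmmod
    exact ⟨r, hr, hrd.trans ⟨p, by rw [hm]; ring⟩, hrm⟩

theorem stmt_2 (k₁ k₂ : ℤ) (hpos : 0 < k₁) (hdvd : k₁ ∣ k₂ ^ 2 - k₂ + 1) :
    k₁ % 3 ≠ 2 := by
  intro h2
  have hn : k₁.toNat % 3 = 2 := by omega
  obtain ⟨p, hp, hpd, hpm⟩ := aux_exists_prime k₁.toNat hn
  have hpz : (p : ℤ) ∣ k₁ := by
    have := Int.natCast_dvd_natCast.mpr hpd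
    simpa [Int.toNat_of_nonneg hpos.le] using this
  exact aux_prime_case p hp k₂ (hpz.trans hdvd) hpm
end

section
/- Let k₁, k₂ be integers with 0 ≤ k₂ < k₁, k₁ dividing k₂² − k₂ + 1 and k₁ dividing k₂² − 1. Then either (k₁, k₂) = (1, 0) or (k₁, k₂) = (3, 2). -/
theorem stmt_4 (k₁ k₂ : ℤ) (h0 : 0 ≤ k₂) (h1 : k₂ < k₁)
    (hd1 : k₁ ∣ k₂ ^ 2 - k₂ + 1) (hd2 : k₁ ∣ k₂ ^ 2 - 1) :
    (k₁ = 1 ∧ k₂ = 0) ∨ (k₁ = 3 ∧ k₂ = 2) := by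
  have hk1pos : 0 < k₁ := lt_of_le_of_lt h0 h1
  have h3 : k₁ ∣ 2 - k₂ := by
    have h := dvd_sub hd1 hd2
    have e : (k₂ ^ 2 - k₂ + 1) - (k₂ ^ 2 - 1) = 2 - k₂ := by ring
    rwa [e] at h
  rcases lt_trichotomy k₂ 2 with h2 | h2 | h2
  · -- k₂ = 0 or k₂ = 1
    interval_cases k₂
    · -- k₂ = 0 : k₁ ∣ -1
      have : k₁ ∣ 1 := by
        have := (dvd_neg).mpr hd2
        simpa using this
      have := Int.le_of_dvd one_pos this
      left; constructor <;> omega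
    · -- k₂ = 1 : k₁ ∣ 1 from hd1
      have : k₁ ∣ 1 := by simpa using hd1
      have := Int.le_of_dvd one_pos this
      omega
  · subst h2
    have h4 : k₁ ∣ 3 := by simpa using hd2
    have := Int.le_of_dvd (by norm_num) h4
    right; constructor <;> omega
  · exfalso
    have h4 : k₁ ∣ k₂ - 2 := by
      have := (dvd_neg).mpr h3
      simpa using this
    have := Int.le_of_dvd (by omega) h4
    omega
end

section
/- Let a, b, c, n be integers with a, c > 0 and n = a·c. Suppose the matrix M = (1/(ac))·[[−ab, −b² − c² + bc],[a², ab − ac]] has all entries in ℤ. Then c divides a and c divides b, and writing a = k₁c, b = k₂c, we have k₁ divides k₂² − k₂ + 1. -/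
theorem stmt_6 (a b c n : ℤ) (ha : 0 < a) (hc : 0 < c) (hn : n = a * c)
    (h11 : a * c ∣ -(a * b)) (h12 : a * c ∣ -b ^ 2 - c ^ 2 + b * c)
    (h21 : a * c ∣ a ^ 2) (h22 : a * c ∣ a * b - a * c) :
    c ∣ a ∧ c ∣ b ∧
      ∀ k₁ k₂ : ℤ, a = k₁ * c → b = k₂ * c → k₁ ∣ k₂ ^ 2 - k₂ + 1 := by
  have ha0 : a ≠ 0 := ha.ne'
  have hc0 : c ≠ 0 := hc.ne'
  have hca : c ∣ a := by
    have : a * c ∣ a * a := by simpa [sq] using h21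
    exact (mul_dvd_mul_iff_left ha0).mp (by simpa [mul_comm] using this)
  have hcb : c ∣ b := by
    have : a * c ∣ a * b := (dvd_neg).mp h11
    exact (mul_dvd_mul_iff_left ha0).mp this
  refine ⟨hca, hcb, ?_⟩
  intro k₁ k₂ h1 h2
  have h : a * c ∣ b ^ 2 + c ^ 2 - b * c := by
    have := dvd_neg.mpr h12
    have e : -(-b ^ 2 - c ^ 2 + b * c) = b ^ 2 + c ^ 2 - b * c := by ring
    rwa [e] at this
  rw [h1, h2] at h
  have h' : (k₁ * (c * c)) ∣ (k₂ ^ 2 - k₂ + 1) * (c * c) := by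
    have e1 : k₁ * c * c = k₁ * (c * c) := by ring
    have e2 : (k₂ * c) ^ 2 + c ^ 2 - k₂ * c * c = (k₂ ^ 2 - k₂ + 1) * (c * c) := by ring
    rwa [e1, e2] at h
  have hcc : (c * c : ℤ) ≠ 0 := mul_ne_zero hc0 hc0
  exact (mul_dvd_mul_iff_right hcc).mp h'
end

section
/- Let L ≤ ℤ² be a finite-index sublattice invariant under the ℤ-linear map σ of ℤ² given by σ(e₁) = e₂ and σ(e₂) = e₃ := −e₁ − e₂ (a cyclic action of order 3), with 3 not dividing the index [ℤ² : L]. Let k be an integer with 3k + 1 ≡ 0 (mod [ℤ² : L]) and set x = (−k−1)e₁ + k e₂. If the classes of σ(x) − x and σ²(x) − σ(x) in ℤ²/L were both zero, then e₁ and e₂ would lie in L; hence the orbit of x + L under the induced action of σ on ℤ²/L has size exactly 3, provided L ≠ ℤ². -/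
private lemma top_of_gens (L : AddSubgroup (ℤ × ℤ)) (h1 : ((1:ℤ),(0:ℤ)) ∈ L)
    (h2 : ((0:ℤ),(1:ℤ)) ∈ L) : L = ⊤ := by
  rw [AddSubgroup.eq_top_iff']
  intro p
  have : p = p.1 • ((1:ℤ),(0:ℤ)) + p.2 • ((0:ℤ),(1:ℤ)) := by
    simp [Prod.ext_iff]
  rw [this]
  exact L.add_mem (L.zsmul_mem h1 _) (L.zsmul_mem h2 _)

theorem stmt_12 (L : AddSubgroup (ℤ × ℤ))
    (σ : (ℤ × ℤ) → (ℤ × ℤ)) (hσ : σ = fun p => (-p.2, p.1 - p.2))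
    (hfin : L.index ≠ 0) (hinv : ∀ v ∈ L, σ v ∈ L)
    (h3 : ¬ 3 ∣ L.index) (k : ℤ) (hk : (L.index : ℤ) ∣ 3 * k + 1)
    (x : ℤ × ℤ) (hx : x = (-k - 1, k)) (hL : L ≠ ⊤) :
    ((QuotientAddGroup.mk (σ x) : (ℤ × ℤ) ⧸ L) ≠ QuotientAddGroup.mk x) ∧
    ((QuotientAddGroup.mk (σ (σ x)) : (ℤ × ℤ) ⧸ L) ≠ QuotientAddGroup.mk x) ∧
    ((QuotientAddGroup.mk (σ (σ x)) : (ℤ × ℤ) ⧸ L) ≠ QuotientAddGroup.mk (σ x)) := by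
  have hsm : ∀ v : ℤ × ℤ, (3 * k + 1) • v ∈ L := by
    intro v
    obtain ⟨m, hm⟩ := hk
    have hidx : (L.index : ℤ) • v ∈ L := by
      simpa [natCast_zsmul] using AddSubgroup.nsmul_index_mem L v
    have heq : (3 * k + 1) • v = m • ((L.index : ℤ) • v) := by
      rw [smul_smul, hm, mul_comm]
    rw [heq]
    exact L.zsmul_mem hidx m
  have he2 : ((0:ℤ),(3*k+1)) ∈ L := by
    have := hsm ((0:ℤ),(1:ℤ)); simpa using this
  have he1 : ((3*k+1:ℤ),(0:ℤ)) ∈ L := by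
    have := hsm ((1:ℤ),(0:ℤ)); simpa using this
  subst hσ hx
  simp only at *
  refine ⟨?_, ?_, ?_⟩
  · intro h
    rw [QuotientAddGroup.eq] at h
    have h' : ((-1:ℤ), (3*k+1:ℤ)) ∈ L := by
      have heq : ((-1:ℤ), (3*k+1:ℤ)) = -((-k, -k-1-k) : ℤ × ℤ) + (-k-1, k) := by
        simp only [Prod.neg_mk, Prod.mk_add_mk, Prod.mk.injEq]
        constructor <;> ring
      rw [heq]; exact h
    have hE1 : ((1:ℤ),(0:ℤ)) ∈ L := by
      have hs := L.sub_mem he2 h'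
      have heq : ((1:ℤ),(0:ℤ)) = ((0:ℤ),(3*k+1)) - ((-1:ℤ), (3*k+1:ℤ)) := by
        simp only [Prod.mk_sub_mk, Prod.mk.injEq]; constructor <;> ring
      rw [heq]; exact hs
    have hE2 : ((0:ℤ),(1:ℤ)) ∈ L := by
      have := hinv _ hE1
      simpa using this
    exact hL (top_of_gens L hE1 hE2)
  · intro h
    rw [QuotientAddGroup.eq] at h
    have h' : ((-3*k-2:ℤ), (-1:ℤ)) ∈ L := by
      have heq : ((-3*k-2:ℤ), (-1:ℤ)) =
          -((-(-k-1-k), -k - (-k-1-k)) : ℤ × ℤ) + (-k-1, k) := by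
        simp only [Prod.neg_mk, Prod.mk_add_mk, Prod.mk.injEq]
        constructor <;> ring
      rw [heq]; exact h
    have hD : ((-1:ℤ),(-1:ℤ)) ∈ L := by
      have hs := L.add_mem he1 h'
      have heq : ((-1:ℤ),(-1:ℤ)) = ((3*k+1:ℤ),(0:ℤ)) + ((-3*k-2:ℤ), (-1:ℤ)) := by
        simp only [Prod.mk_add_mk, Prod.mk.injEq]; constructor <;> ring
      rw [heq]; exact hs
    have hE1 : ((1:ℤ),(0:ℤ)) ∈ L := by
      have := hinv _ hD
      simpa using this
    have hE2 : ((0:ℤ),(1:ℤ)) ∈ L := by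
      have hs := L.neg_mem (L.add_mem hD hE1)
      have heq : ((0:ℤ),(1:ℤ)) = -(((-1:ℤ),(-1:ℤ)) + ((1:ℤ),(0:ℤ))) := by
        simp only [Prod.mk_add_mk, Prod.neg_mk, Prod.mk.injEq]; constructor <;> ring
      rw [heq]; exact hs
    exact hL (top_of_gens L hE1 hE2)
  · intro h
    rw [QuotientAddGroup.eq] at h
    have h' : ((-3*k-1:ℤ), (-3*k-2:ℤ)) ∈ L := by
      have heq : ((-3*k-1:ℤ), (-3*k-2:ℤ)) =
          -((-(-k-1-k), -k - (-k-1-k)) : ℤ × ℤ) + (-k, -k-1-k) := by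
        simp only [Prod.neg_mk, Prod.mk_add_mk, Prod.mk.injEq]
        constructor <;> ring
      rw [heq]; exact h
    have hE2 : ((0:ℤ),(1:ℤ)) ∈ L := by
      have hs := L.neg_mem (L.add_mem (L.add_mem he1 he2) h')
      have heq : ((0:ℤ),(1:ℤ)) =
          -(((3*k+1:ℤ),(0:ℤ)) + ((0:ℤ),(3*k+1)) + ((-3*k-1:ℤ), (-3*k-2:ℤ))) := by
        simp only [Prod.mk_add_mk, Prod.neg_mk, Prod.mk.injEq]; constructor <;> ring
      rw [heq]; exact hs
    have hE1 : ((1:ℤ),(0:ℤ)) ∈ L := by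
      have h1 := hinv _ hE2
      have h2 := hinv _ h1
      simpa using h2
    exact hL (top_of_gens L hE1 hE2)
end
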